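/- Let H be the d×d orthonormal Walsh–Hadamard matrix and D' a random diagonal matrix with i.i.d. ±1 diagonal entries. There exists a universal constant c₇ > 0 such that for any unit vector x ∈ R^d and any t > 0, P(‖H D' x‖₄ ≥ t·d^{−1/4}) ≤ e^{1 − c₇ t⁴}. -/

import Mathlib

/-!
Write `y = H D' x`. As `H` is orthogonal, `∑ yᵢ² = 1`, so Jensen's inequality for `exp` with the
weights `yᵢ²` gives `exp (d ‖y‖₄⁴ / 8) ≤ ∑ᵢ yᵢ² exp (d yᵢ² / 8)`. Since every entry of `H` has
modulus `d^{-1/2}`, each `√d yᵢ` is a Rademacher sum with a unit coefficient vector, and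
Khintchine's moment bound `E S^{2k} ≤ (2k-1)‼` turns the exponential series of `S² exp (S² / 8)`
into `∑ₖ (2k+1) 4^{-k} = 20/9 < e`. Markov's inequality for `exp (d ‖y‖₄⁴ / 8)` then gives the
tail bound with `c₇ = 1/8`.
-/

open Real Finset

/-- The sign `±1` associated to a Boolean. -/
def sgn (b : Bool) : ℝ := if b then 1 else -1

/-- The `d × d` orthonormal Walsh–Hadamard matrix for `d = 2^n`. -/
noncomputable def WH (n : ℕ) : Matrix (Fin (2 ^ n)) (Fin (2 ^ n)) ℝ := fun i j =>
  (Real.sqrt (2 ^ n))⁻¹ *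
    (-1 : ℝ) ^ (∑ b ∈ Finset.range n, ((i : ℕ).testBit b).toNat * ((j : ℕ).testBit b).toNat)

open scoped Matrix Nat

theorem Finset.sum_range_two_mul_add_one_of_odd_eq_zero {M : Type*} [AddCommMonoid M]
    (f : ℕ → M) (hf : ∀ r, Odd r → f r = 0) (k : ℕ) :
    ∑ r ∈ range (2 * k + 1), f r = ∑ i ∈ range (k + 1), f (2 * i) := by
  induction k with
  | zero => simp
  | succ k ih =>
    rw [show 2 * (k + 1) + 1 = 2 * k + 1 + 1 + 1 by ring, sum_range_succ, sum_range_succ, ih,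
      hf _ (odd_two_mul_add_one k), add_zero, sum_range_succ (n := k + 1)]
    rfl

theorem add_pow_two_mul_add_neg_add_pow {R : Type*} [CommRing R] (x y : R) (k : ℕ) :
    (x + y) ^ (2 * k) + (-x + y) ^ (2 * k) =
      2 * ∑ i ∈ range (k + 1), (2 * k).choose (2 * i) * (x ^ 2) ^ i * y ^ (2 * (k - i)) := by
  rw [add_pow, add_pow, ← sum_add_distrib, sum_range_two_mul_add_one_of_odd_eq_zero, mul_sum]
  · refine sum_congr rfl fun i _ => ?_
    rw [(even_two_mul i).neg_pow, ← pow_mul, Nat.mul_sub]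
    ring
  · intro r hr
    rw [hr.neg_pow]
    ring

theorem hasSum_two_mul_add_one_mul_geometric {r : ℝ} (hr₀ : 0 ≤ r) (hr₁ : r < 1) :
    HasSum (fun k : ℕ => (2 * k + 1) * r ^ k) ((1 + r) / (1 - r) ^ 2) := by
  have hr : ‖r‖ < 1 := by rwa [norm_of_nonneg hr₀]
  have h := ((hasSum_coe_mul_geometric_of_norm_lt_one hr).mul_left 2).add
    (hasSum_geometric_of_lt_one hr₀ hr₁)
  rw [show (1 + r) / (1 - r) ^ 2 = 2 * (r / (1 - r) ^ 2) + (1 - r)⁻¹ by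
    field_simp [(sub_pos.mpr hr₁).ne']; ring]
  exact h.congr_fun fun k => by ring

theorem Nat.doubleFactorial_two_mul_sub_one_mul (k : ℕ) :
    (2 * k - 1)‼ * (2 ^ k * k !) = (2 * k)! := by
  rcases k with _ | k
  · rfl
  · rw [← Nat.doubleFactorial_two_mul, show 2 * (k + 1) = 2 * k + 1 + 1 by ring,
      Nat.factorial_eq_mul_doubleFactorial, Nat.add_sub_cancel, mul_comm]

theorem Nat.doubleFactorial_sub_one_le : ∀ n : ℕ, (n - 1)‼ ≤ n‼
  | 0 => le_rfl
  | 1 => le_rfl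
  | n + 2 => by
    rw [Nat.doubleFactorial_add_two, show n + 2 - 1 = n + 1 by omega, Nat.doubleFactorial_add_one]
    exact Nat.mul_le_mul (by omega) (Nat.doubleFactorial_sub_one_le n)

theorem Nat.doubleFactorial_two_mul_add_one_le (k : ℕ) :
    (2 * k + 1)‼ ≤ (2 * k + 1) * (2 ^ k * k !) := by
  rw [Nat.doubleFactorial_add_one, ← Nat.doubleFactorial_two_mul]
  exact Nat.mul_le_mul_left _ (Nat.doubleFactorial_sub_one_le _)

theorem Nat.choose_mul_doubleFactorial_le {i k : ℕ} (hi : i ≤ k) :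
    (2 * k).choose (2 * i) * (2 * (k - i) - 1)‼ ≤ (2 * k - 1)‼ * k.choose i := by
  refine Nat.le_of_mul_le_mul_right ?_ (by positivity : 0 < (2 * i)! * (2 ^ (k - i) * (k - i)!))
  calc (2 * k).choose (2 * i) * (2 * (k - i) - 1)‼ * ((2 * i)! * (2 ^ (k - i) * (k - i)!))
      = (2 * k)! := by
        rw [mul_mul_mul_comm, Nat.doubleFactorial_two_mul_sub_one_mul, Nat.mul_sub,
          Nat.choose_mul_factorial_mul_factorial (by omega)]
    _ = (2 * k - 1)‼ * k.choose i * ((k - i)! * 2 ^ (k - i) * (2 ^ i * i !)) := by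
        rw [← Nat.doubleFactorial_two_mul_sub_one_mul, ← Nat.choose_mul_factorial_mul_factorial hi,
          ← Nat.sub_add_cancel hi, pow_add, Nat.add_sub_cancel]
        ring
    _ ≤ (2 * k - 1)‼ * k.choose i * ((2 * i)! * (2 ^ (k - i) * (k - i)!)) := by
        rw [← Nat.doubleFactorial_two_mul]
        calc _ ≤ (2 * k - 1)‼ * k.choose i * ((k - i)! * 2 ^ (k - i) * (2 * i)!) := by
              gcongr; exact Nat.doubleFactorial_le_factorial _
          _ = _ := by ring

theorem card_filter_le_sum_exp {α : Type*} (s : Finset α) (p : α → Prop) [DecidablePred p]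
    (f : α → ℝ) (c : ℝ) (h : ∀ x ∈ s, p x → c ≤ f x) :
    (#(s.filter p) : ℝ) ≤ ∑ x ∈ s, exp (f x - c) := by
  rw [card_filter]
  push_cast
  refine sum_le_sum fun x hx => ?_
  split_ifs with hp
  · simpa using h x hx hp
  · positivity

theorem pow_four_le_mul_of_mul_rpow_le {t d z : ℝ} (ht : 0 ≤ t) (hd : 0 < d) (hz : 0 ≤ z)
    (h : t * d ^ (-(1 : ℝ) / 4) ≤ z ^ ((1 : ℝ) / 4)) : t ^ 4 ≤ d * z := by
  have h4 := pow_le_pow_left₀ (by positivity) h 4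
  rw [mul_pow, ← rpow_natCast (d ^ _), ← rpow_natCast (z ^ _), ← rpow_mul hd.le,
    ← rpow_mul hz] at h4
  norm_num at h4
  rw [rpow_neg_one, ← div_eq_mul_inv, div_le_iff₀ hd] at h4
  linarith

theorem sum_mulVec_sq_of_transpose_mul_self_eq_one {ι κ : Type*} [Fintype ι] [Fintype κ]
    [DecidableEq κ] (A : Matrix ι κ ℝ) (hA : Aᵀ * A = 1) (v : κ → ℝ) :
    ∑ i, (A *ᵥ v) i ^ 2 = ∑ j, v j ^ 2 := by
  simp only [sq]
  change (A *ᵥ v) ⬝ᵥ (A *ᵥ v) = v ⬝ᵥ v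
  rw [Matrix.dotProduct_mulVec, ← Matrix.mulVec_transpose, Matrix.mulVec_mulVec, hA,
    Matrix.one_mulVec, dotProduct_comm]

theorem sgn_sq (b : Bool) : sgn b ^ 2 = 1 := by cases b <;> simp [sgn]

section Rademacher

variable {m : ℕ}

def rademacherSum (ε : Fin m → Bool) (a : Fin m → ℝ) : ℝ := ∑ j, sgn (ε j) * a j

theorem rademacherSum_cons (b : Bool) (ε : Fin m → Bool) (a : Fin (m + 1) → ℝ) :
    rademacherSum (Fin.cons b ε) a = sgn b * a 0 + rademacherSum ε (Fin.tail a) := by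
  simp [rademacherSum, Fin.sum_univ_succ, Fin.tail]

theorem Fintype.sum_pi_fin_succ_bool {M : Type*} [AddCommMonoid M]
    (F : (Fin (m + 1) → Bool) → M) :
    ∑ ε, F ε = ∑ ε : Fin m → Bool, (F (Fin.cons true ε) + F (Fin.cons false ε)) := by
  rw [← (Fin.consEquiv _).sum_comp, Fintype.sum_prod_type_right]
  simp only [Fintype.sum_bool]
  rfl

theorem sum_rademacherSum_pow_two_mul_le (a : Fin m → ℝ) (k : ℕ) :
    ∑ ε, rademacherSum ε a ^ (2 * k) ≤ 2 ^ m * (2 * k - 1)‼ * (∑ j, a j ^ 2) ^ k := by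
  induction m generalizing k with
  | zero => rcases k with _ | k <;> simp [rademacherSum]
  | succ m ih =>
    set σ := ∑ j, Fin.tail a j ^ 2
    have hσ : ∑ j, a j ^ 2 = a 0 ^ 2 + σ := Fin.sum_univ_succ _
    calc ∑ ε, rademacherSum ε a ^ (2 * k)
        = 2 * ∑ i ∈ range (k + 1), (2 * k).choose (2 * i) * (a 0 ^ 2) ^ i *
            ∑ ε, rademacherSum ε (Fin.tail a) ^ (2 * (k - i)) := by
          simp only [Fintype.sum_pi_fin_succ_bool, rademacherSum_cons, sgn, if_true, one_mul,
            Bool.false_eq_true, if_false, neg_one_mul, add_pow_two_mul_add_neg_add_pow]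
          rw [← mul_sum, sum_comm]
          simp only [mul_sum]
      _ ≤ 2 * ∑ i ∈ range (k + 1), (2 * k).choose (2 * i) * (a 0 ^ 2) ^ i *
            (2 ^ m * (2 * (k - i) - 1)‼ * σ ^ (k - i)) := by
          gcongr with i; exact ih _ _
      _ ≤ 2 * ∑ i ∈ range (k + 1), 2 ^ m * (2 * k - 1)‼ *
            (k.choose i * (a 0 ^ 2) ^ i * σ ^ (k - i)) := by
          refine mul_le_mul_of_nonneg_left (sum_le_sum fun i hi => ?_) zero_le_two
          have hik : i ≤ k := Nat.lt_succ_iff.mp (mem_range.mp hi)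
          calc (2 * k).choose (2 * i) * (a 0 ^ 2) ^ i * (2 ^ m * (2 * (k - i) - 1)‼ * σ ^ (k - i))
              = 2 ^ m * (((2 * k).choose (2 * i) * (2 * (k - i) - 1)‼ : ℕ) : ℝ) *
                  ((a 0 ^ 2) ^ i * σ ^ (k - i)) := by push_cast; ring
            _ ≤ 2 ^ m * (((2 * k - 1)‼ * k.choose i : ℕ) : ℝ) * ((a 0 ^ 2) ^ i * σ ^ (k - i)) := by
                gcongr 2 ^ m * (Nat.cast ?_) * _
                exact Nat.choose_mul_doubleFactorial_le hik
            _ = _ := by push_cast; ring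
      _ = 2 ^ (m + 1) * (2 * k - 1)‼ * (∑ j, a j ^ 2) ^ k := by
          rw [hσ, add_pow, mul_sum, mul_sum]
          refine sum_congr rfl fun i _ => ?_
          ring

theorem sum_sq_rademacherSum_mul_exp_le (a : Fin m → ℝ) (ha : 0 < ∑ j, a j ^ 2) :
    ∑ ε, rademacherSum ε a ^ 2 * exp (rademacherSum ε a ^ 2 / (8 * ∑ j, a j ^ 2)) ≤
      20 / 9 * 2 ^ m * ∑ j, a j ^ 2 := by
  set s := ∑ j, a j ^ 2
  have hseries : ∀ ε, HasSum (fun k : ℕ => (rademacherSum ε a ^ 2) ^ (k + 1) / ((8 * s) ^ k * k !))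
      (rademacherSum ε a ^ 2 * exp (rademacherSum ε a ^ 2 / (8 * s))) := by
    intro ε
    have h := (NormedSpace.expSeries_div_hasSum_exp (rademacherSum ε a ^ 2 / (8 * s))).mul_left
      (rademacherSum ε a ^ 2)
    rw [← exp_eq_exp_ℝ] at h
    exact h.congr_fun fun k => by rw [div_pow, pow_succ]; field_simp
  have hterm : ∀ k : ℕ, ∑ ε, (rademacherSum ε a ^ 2) ^ (k + 1) / ((8 * s) ^ k * k !) ≤
      2 ^ m * s * ((2 * k + 1) * (1 / 4) ^ k) := by
    intro k
    rw [← sum_div, div_le_iff₀ (by positivity)]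
    calc ∑ ε, (rademacherSum ε a ^ 2) ^ (k + 1) = ∑ ε, rademacherSum ε a ^ (2 * (k + 1)) := by
          simp only [pow_mul]
      _ ≤ 2 ^ m * (2 * k + 1)‼ * s ^ (k + 1) := by
          simpa only [show 2 * (k + 1) - 1 = 2 * k + 1 by omega] using
            sum_rademacherSum_pow_two_mul_le a (k + 1)
      _ ≤ 2 ^ m * ((2 * k + 1) * (2 ^ k * k !) : ℕ) * s ^ (k + 1) := by
          gcongr; exact Nat.doubleFactorial_two_mul_add_one_le k
      _ = 2 ^ m * s * ((2 * k + 1) * (1 / 4) ^ k) * ((8 * s) ^ k * k !) := by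
          rw [show (8 : ℝ) * s = 2 * 4 * s by norm_num, mul_pow, mul_pow, one_div_pow]
          field_simp
          push_cast
          ring
  have hgeom := (hasSum_two_mul_add_one_mul_geometric (r := 1 / 4) (by norm_num)
    (by norm_num)).mul_left (2 ^ m * s)
  rw [show 2 ^ m * s * ((1 + 1 / 4) / (1 - 1 / 4) ^ 2) = 20 / 9 * 2 ^ m * s by ring] at hgeom
  exact hasSum_le hterm (hasSum_sum fun ε _ => hseries ε) hgeom

theorem mulVec_sgn_mul_apply (A : Matrix (Fin m) (Fin m) ℝ) (ε : Fin m → Bool)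
    (x : Fin m → ℝ) (i : Fin m) :
    (A *ᵥ fun j => sgn (ε j) * x j) i = rademacherSum ε fun j => A i j * x j := by
  simp only [Matrix.mulVec, dotProduct, rademacherSum]
  exact sum_congr rfl fun j _ => by ring

theorem sum_exp_sum_mulVec_sgn_mul_pow_four_le (A : Matrix (Fin m) (Fin m) ℝ)
    (hA : Aᵀ * A = 1) (hflat : ∀ i j, A i j ^ 2 = (m : ℝ)⁻¹) (x : Fin m → ℝ)
    (hx : ∑ j, x j ^ 2 = 1) :
    ∑ ε : Fin m → Bool, exp (m * (∑ i, (A *ᵥ fun j => sgn (ε j) * x j) i ^ 4) / 8) ≤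
      20 / 9 * 2 ^ m := by
  have hm : (0 : ℝ) < m := by
    rcases m with _ | m
    · simp at hx
    · positivity
  set y := fun (ε : Fin m → Bool) => A *ᵥ fun j => sgn (ε j) * x j
  have hy : ∀ ε, ∑ i, y ε i ^ 2 = 1 := fun ε => by
    simp only [y, sum_mulVec_sq_of_transpose_mul_self_eq_one A hA, mul_pow, sgn_sq, one_mul, hx]
  have hjensen : ∀ ε,
      exp (m * (∑ i, y ε i ^ 4) / 8) ≤ ∑ i, y ε i ^ 2 * exp (m * y ε i ^ 2 / 8) := by
    intro ε
    have h := convexOn_exp.map_sum_le (t := univ) (w := fun i => y ε i ^ 2)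
      (p := fun i => m * y ε i ^ 2 / 8) (fun i _ => by positivity) (hy ε) (fun i _ => trivial)
    simp only [smul_eq_mul] at h
    have hexponent : m * (∑ i, y ε i ^ 4) / 8 = ∑ i, y ε i ^ 2 * (m * y ε i ^ 2 / 8) := by
      rw [mul_sum, sum_div]; exact sum_congr rfl fun i _ => by ring
    rwa [hexponent]
  have hcoord : ∀ i, ∑ ε, y ε i ^ 2 * exp (m * y ε i ^ 2 / 8) ≤ 20 / 9 * 2 ^ m * (m : ℝ)⁻¹ := by
    intro i
    have hrow : ∑ j, (A i j * x j) ^ 2 = (m : ℝ)⁻¹ := by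
      simp only [mul_pow, hflat, ← mul_sum, hx, mul_one]
    have h := sum_sq_rademacherSum_mul_exp_le (fun j => A i j * x j) (by rw [hrow]; positivity)
    simp only [y, mulVec_sgn_mul_apply, hrow] at h ⊢
    convert h using 4 with ε
    rw [div_mul_eq_div_div, div_inv_eq_mul]
    ring
  calc ∑ ε, exp (m * (∑ i, y ε i ^ 4) / 8)
      ≤ ∑ ε, ∑ i, y ε i ^ 2 * exp (m * y ε i ^ 2 / 8) := sum_le_sum fun ε _ => hjensen ε
    _ = ∑ i, ∑ ε, y ε i ^ 2 * exp (m * y ε i ^ 2 / 8) := sum_comm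
    _ ≤ ∑ _i : Fin m, 20 / 9 * 2 ^ m * (m : ℝ)⁻¹ := sum_le_sum fun i _ => hcoord i
    _ = 20 / 9 * 2 ^ m := by
        simp only [sum_const, card_univ, Fintype.card_fin, nsmul_eq_mul]
        field_simp

end Rademacher

theorem WH_apply_eq_prod (n : ℕ) (i j : Fin (2 ^ n)) :
    WH n i j = (√(2 ^ n))⁻¹ * ∏ b, (-1 : ℝ) ^
      ((finFunctionFinEquiv.symm i b : ℕ) * (finFunctionFinEquiv.symm j b : ℕ)) := by
  rw [WH, prod_pow_eq_pow_sum, Finset.sum_range]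
  simp only [Nat.toNat_testBit, finFunctionFinEquiv_symm_apply_val]

theorem WH_sq (n : ℕ) (i j : Fin (2 ^ n)) : WH n i j ^ 2 = ((2 : ℝ) ^ n)⁻¹ := by
  rw [WH, mul_pow, ← pow_mul, (even_two.mul_left _).neg_one_pow, mul_one, inv_pow,
    sq_sqrt (by positivity)]

-- In binary coordinates the column inner products are character sums, which factor over the bits.
theorem WH_transpose_mul_self (n : ℕ) : (WH n)ᵀ * WH n = 1 := by
  ext j k
  set e : Fin (2 ^ n) ≃ (Fin n → Fin 2) := finFunctionFinEquiv.symm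
  have hfactor : ∀ b, ∑ c : Fin 2, (-1 : ℝ) ^ ((c : ℕ) * ((e j b : ℕ) + e k b)) =
      if e j b = e k b then 2 else 0 := by
    intro b
    generalize e j b = u; generalize e k b = v
    fin_cases u <;> fin_cases v <;> norm_num
  calc ∑ i, WH n i j * WH n i k
      = ((2 : ℝ) ^ n)⁻¹ * ∑ i, ∏ b, (-1 : ℝ) ^ ((e i b : ℕ) * ((e j b : ℕ) + e k b)) := by
        rw [mul_sum]
        refine sum_congr rfl fun i _ => ?_
        rw [WH_apply_eq_prod, WH_apply_eq_prod, mul_mul_mul_comm, ← mul_inv,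
          mul_self_sqrt (by positivity), ← prod_mul_distrib]
        simp only [← pow_add, mul_add]
        rfl
    _ = ((2 : ℝ) ^ n)⁻¹ * ∏ b, ∑ c : Fin 2, (-1 : ℝ) ^ ((c : ℕ) * ((e j b : ℕ) + e k b)) := by
        rw [Fintype.prod_sum,
          e.sum_comp (fun v => ∏ b, (-1 : ℝ) ^ ((v b : ℕ) * ((e j b : ℕ) + e k b)))]
    _ = (1 : Matrix (Fin (2 ^ n)) (Fin (2 ^ n)) ℝ) j k := by
        simp only [hfactor, Fintype.prod_ite_zero, ← funext_iff, e.injective.eq_iff,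
          Matrix.one_apply]
        split_ifs <;> simp

/-- Lemma 1 of the paper: there is a universal constant `c₇ > 0`
such that for any unit vector `x ∈ ℝ^d` (`d = 2^n`) and any `t > 0`,
`P(‖H D' x‖₄ ≥ t d^{-1/4}) ≤ e^{1 - c₇ t⁴}`, the probability being uniform over the
sign patterns of the diagonal of `D'`. -/
theorem flattening_tail_bound :
    ∃ c₇ > (0 : ℝ), ∀ (n : ℕ) (x : Fin (2 ^ n) → ℝ), ∑ j, x j ^ 2 = 1 →
      ∀ t > (0 : ℝ),
      ((Finset.univ.filter fun ε : Fin (2 ^ n) → Bool =>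
          t * ((2 ^ n : ℝ)) ^ (-(1 : ℝ) / 4)
            ≤ (∑ i, ((WH n).mulVec (fun j => sgn (ε j) * x j) i) ^ 4) ^ ((1 : ℝ) / 4)).card : ℝ)
          / 2 ^ (2 ^ n)
        ≤ Real.exp (1 - c₇ * t ^ 4) := by
  refine ⟨1 / 8, by norm_num, fun n x hx t ht => ?_⟩
  set Z := fun ε : Fin (2 ^ n) → Bool => ∑ i, ((WH n).mulVec (fun j => sgn (ε j) * x j) i) ^ 4
  have hmoment := sum_exp_sum_mulVec_sgn_mul_pow_four_le (WH n) (WH_transpose_mul_self n)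
    (by simpa using WH_sq n) x hx
  push_cast at hmoment
  rw [div_le_iff₀ (by positivity)]
  calc _ ≤ ∑ ε, exp (2 ^ n * Z ε / 8 - t ^ 4 / 8) := by
        refine card_filter_le_sum_exp _ _ _ _ fun ε _ hε => ?_
        have := pow_four_le_mul_of_mul_rpow_le ht.le (by positivity)
          (sum_nonneg fun i _ => by positivity) hε
        linarith
    _ = exp (-(t ^ 4 / 8)) * ∑ ε, exp (2 ^ n * Z ε / 8) := by
        rw [mul_sum]; exact sum_congr rfl fun ε _ => by rw [← exp_add]; ring_nf
    _ ≤ exp (-(t ^ 4 / 8)) * (exp 1 * 2 ^ 2 ^ n) := by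
        gcongr
        exact hmoment.trans <|
          mul_le_mul_of_nonneg_right (by linarith [exp_one_gt_d9]) (by positivity)
    _ = exp (1 - 1 / 8 * t ^ 4) * 2 ^ 2 ^ n := by rw [← mul_assoc, ← exp_add]; ring_nf
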